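/- arXiv:2008.07806 — 3 statements merged into one kernel-verified Lean document; each statement's English description precedes it below -/
import Mathlib

section
/- Let a and b be nonzero integers, let A be the 3×3 upper unitriangular integer matrix with (1,2)-entry a and all other off-diagonal entries 0, and let B be the 3×3 upper unitriangular integer matrix with (2,3)-entry b and all other off-diagonal entries 0. Then the assignment x₁ ↦ A, x₂ ↦ B determines a well-defined group homomorphism from the reduced free group K₂ into GL₃(ℤ), and this homomorphism is injective. -/
/-- The commutator `[x, y] = x⁻¹ y⁻¹ x y` used in the paper. -/
def pcomm {G : Type*} [Group G] (x y : G) : G := x⁻¹ * y⁻¹ * x * y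

/-- The relators of the reduced free group: `[xᵢ, g⁻¹ xᵢ g]` for every generator `xᵢ`
and every `g` in the free group. -/
def reducedRels (n : ℕ) : Set (FreeGroup (Fin n)) :=
  { x | ∃ (i : Fin n) (g : FreeGroup (Fin n)),
        x = pcomm (FreeGroup.of i) (g⁻¹ * FreeGroup.of i * g) }

/-- The reduced free group `K_n`, the quotient of the free group `F_n` by the normal
closure of the relators `[xᵢ, g⁻¹ xᵢ g]`. -/
abbrev K (n : ℕ) := FreeGroup (Fin n) ⧸ Subgroup.normalClosure (reducedRels n)

/-- The generator `x_{i+1}` of `K_n` (0-based index `i`). -/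
def xg {n : ℕ} (i : Fin n) : K n := QuotientGroup.mk (FreeGroup.of i)

/-!
The relations `[x₁, x₂⁻¹ x₁ x₂] = [x₂, x₁⁻¹ x₂ x₁] = 1` say exactly that `c = [x₁, x₂]` commutes
with `x₁` and `x₂`, so `c` is central in `K₂` and every element of `K₂` has the form
`x₁ ^ p * x₂ ^ q * c ^ r`. Its image is the unitriangular matrix with entries `p a`, `q b` and
`(r + p q) a b` above the diagonal, which is the identity only for `p = q = r = 0`.
The representation is well defined because the upper unitriangular group is nilpotent of class
two, so each of its elements commutes with all of its conjugates.
-/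

section Commutator

variable {G : Type*} [Group G] {X Y : G}

theorem pcomm_eq_one_iff : pcomm X Y = 1 ↔ Commute X Y := by
  rw [show pcomm X Y = (Y * X)⁻¹ * (X * Y) by simp [pcomm, mul_assoc], inv_mul_eq_one, eq_comm]
  rfl

theorem map_pcomm {H : Type*} [Group H] (f : G →* H) (x y : G) :
    f (pcomm x y) = pcomm (f x) (f y) := by
  simp [pcomm]

theorem inv_mul_mul_zpow (a b : G) (n : ℤ) : (a⁻¹ * b * a) ^ n = a⁻¹ * b ^ n * a := by
  simpa using conj_zpow (a := a⁻¹) (b := b) (i := n)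

theorem commute_pcomm_left (h : Commute X (Y⁻¹ * X * Y)) : Commute (pcomm X Y) X := by
  rw [show pcomm X Y = X⁻¹ * (Y⁻¹ * X * Y) by simp [pcomm, mul_assoc]]
  exact (Commute.refl X).inv_left.mul_left h.symm

theorem commute_pcomm_right (h : Commute Y (X⁻¹ * Y * X)) : Commute (pcomm X Y) Y := by
  rw [show pcomm X Y = (X⁻¹ * Y * X)⁻¹ * Y by simp [pcomm, mul_assoc]]
  exact h.symm.inv_left.mul_left (Commute.refl Y)

variable (hX : Commute (pcomm X Y) X) (hY : Commute (pcomm X Y) Y)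
include hX hY

theorem zpow_mul_zpow_eq_of_commute_pcomm (p q : ℤ) :
    Y ^ q * X ^ p = X ^ p * Y ^ q * pcomm X Y ^ (-(p * q)) := by
  set c := pcomm X Y
  have hconjY (k : ℤ) : Y⁻¹ * X ^ k * Y = X ^ k * c ^ k := by
    rw [← hX.symm.mul_zpow, ← inv_mul_mul_zpow]
    simp [c, pcomm, mul_assoc]
  have hconjX : X ^ (-p) * Y * X ^ p = Y * c ^ (-p) := by
    calc X ^ (-p) * Y * X ^ p = Y * (Y⁻¹ * X ^ (-p) * Y) * X ^ p := by group
      _ = Y * c ^ (-p) := by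
        rw [hconjY, mul_assoc, mul_assoc, (hX.zpow_zpow (-p) p).eq]
        group
  calc Y ^ q * X ^ p = X ^ p * (X ^ (-p) * Y * X ^ p) ^ q := by
        rw [zpow_neg, inv_mul_mul_zpow]
        group
    _ = X ^ p * Y ^ q * c ^ (-(p * q)) := by
        rw [hconjX, (hY.zpow_left _).symm.mul_zpow, ← zpow_mul, mul_assoc, neg_mul]

theorem exists_eq_zpow_mul_zpow_mul_pcomm_zpow (hgen : Subgroup.closure {X, Y} = ⊤) (g : G) :
    ∃ p q r : ℤ, g = X ^ p * Y ^ q * pcomm X Y ^ r := by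
  set c := pcomm X Y
  have zpow_mul_normalForm (k p q r : ℤ) :
      Y ^ k * (X ^ p * Y ^ q * c ^ r) = X ^ p * Y ^ (q + k) * c ^ (r - p * k) := by
    calc Y ^ k * (X ^ p * Y ^ q * c ^ r) = Y ^ k * X ^ p * Y ^ q * c ^ r := by
          simp only [mul_assoc]
      _ = X ^ p * Y ^ k * (c ^ (-(p * k)) * Y ^ q) * c ^ r := by
          rw [zpow_mul_zpow_eq_of_commute_pcomm hX hY]
          simp only [mul_assoc, c]
      _ = X ^ p * Y ^ (q + k) * c ^ (r - p * k) := by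
          rw [(hY.zpow_zpow _ q).eq]
          group
  have hg : g ∈ Subgroup.closure {X, Y} := hgen ▸ Subgroup.mem_top g
  induction hg using Subgroup.closure_induction_left with
  | one => exact ⟨0, 0, 0, by simp⟩
  | mul_left x hx y _ ih =>
    obtain ⟨p, q, r, rfl⟩ := ih
    rcases hx with rfl | rfl
    · exact ⟨p + 1, q, r, by group⟩
    · exact ⟨p, q + 1, r - p * 1, by simpa using zpow_mul_normalForm 1 p q r⟩
  | inv_mul_cancel x hx y _ ih =>
    obtain ⟨p, q, r, rfl⟩ := ih
    rcases hx with rfl | rfl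
    · exact ⟨p - 1, q, r, by group⟩
    · exact ⟨p, q + -1, r - p * -1, by simpa using zpow_mul_normalForm (-1) p q r⟩

end Commutator

section ReducedFreeGroup

variable {n : ℕ}

def K.lift {G : Type*} [Group G] (f : Fin n → G)
    (hf : ∀ i, ∀ g ∈ Subgroup.closure (Set.range f), Commute (f i) (g⁻¹ * f i * g)) :
    K n →* G :=
  PresentedGroup.toGroup (rels := reducedRels n) (f := f) <| by
    rintro _ ⟨i, g, rfl⟩
    rw [map_pcomm, pcomm_eq_one_iff]
    simpa using hf i (FreeGroup.lift f g) (FreeGroup.range_lift_eq_closure (f := f) ▸ ⟨g, rfl⟩)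

theorem K.lift_xg {G : Type*} [Group G] (f : Fin n → G)
    (hf : ∀ i, ∀ g ∈ Subgroup.closure (Set.range f), Commute (f i) (g⁻¹ * f i * g))
    (i : Fin n) : K.lift f hf (xg i) = f i :=
  FreeGroup.lift_apply_of

theorem closure_range_xg : Subgroup.closure (Set.range (xg (n := n))) = ⊤ :=
  PresentedGroup.closure_range_of (reducedRels n)

theorem xg_commute_conj (i : Fin n) (g : K n) : Commute (xg i) (g⁻¹ * xg i * g) := by
  induction g using QuotientGroup.induction_on with
  | H g =>
    rw [← pcomm_eq_one_iff]
    exact (QuotientGroup.eq_one_iff _).2 (Subgroup.subset_normalClosure ⟨i, g, rfl⟩)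

theorem closure_xg_zero_xg_one : Subgroup.closure {xg 0, xg 1} = (⊤ : Subgroup (K 2)) := by
  rw [← closure_range_xg]
  congr 1
  ext
  simp [Fin.exists_fin_two, eq_comm]

end ReducedFreeGroup

section Unitriangular

open scoped Matrix

def unitri (x y z : ℤ) : Matrix (Fin 3) (Fin 3) ℤ := !![1, x, y; 0, 1, z; 0, 0, 1]

theorem unitri_mul (x y z x' y' z' : ℤ) :
    unitri x y z * unitri x' y' z' = unitri (x + x') (y + y' + x * z') (z + z') := by
  ext i j
  fin_cases i <;> fin_cases j <;> simp [unitri] <;> ring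

theorem unitri_zero : unitri 0 0 0 = 1 := by
  ext i j
  fin_cases i <;> fin_cases j <;> rfl

theorem unitri_eq_one_iff {x y z : ℤ} : unitri x y z = 1 ↔ x = 0 ∧ y = 0 ∧ z = 0 := by
  refine ⟨fun h => ⟨?_, ?_, ?_⟩, by rintro ⟨rfl, rfl, rfl⟩; exact unitri_zero⟩
  · simpa [unitri] using congrFun (congrFun h 0) 1
  · simpa [unitri] using congrFun (congrFun h 0) 2
  · simpa [unitri] using congrFun (congrFun h 1) 2

theorem unitri_mul_unitri_neg (x y z : ℤ) :
    unitri x y z * unitri (-x) (x * z - y) (-z) = 1 := by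
  rw [unitri_mul, ← unitri_zero]
  congr 1 <;> ring

theorem coe_inv_of_coe_eq_unitri {M : GL (Fin 3) ℤ} {x y z : ℤ}
    (h : (M : Matrix (Fin 3) (Fin 3) ℤ) = unitri x y z) :
    ((M⁻¹ : GL (Fin 3) ℤ) : Matrix (Fin 3) (Fin 3) ℤ) = unitri (-x) (x * z - y) (-z) := by
  rw [Matrix.coe_units_inv, h]
  exact Matrix.inv_eq_right_inv (unitri_mul_unitri_neg x y z)

def unitriangular : Subgroup (GL (Fin 3) ℤ) where
  carrier := {M | ∃ x y z, (M : Matrix (Fin 3) (Fin 3) ℤ) = unitri x y z}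
  mul_mem' := by
    rintro M N ⟨x, y, z, hM⟩ ⟨x', y', z', hN⟩
    exact ⟨_, _, _, by rw [Units.val_mul, hM, hN, unitri_mul]⟩
  one_mem' := ⟨0, 0, 0, unitri_zero.symm⟩
  inv_mem' := by
    rintro M ⟨x, y, z, hM⟩
    exact ⟨_, _, _, coe_inv_of_coe_eq_unitri hM⟩

theorem commute_conj_of_mem_unitriangular {U V : GL (Fin 3) ℤ} (hU : U ∈ unitriangular)
    (hV : V ∈ unitriangular) : Commute U (V⁻¹ * U * V) := by
  obtain ⟨u₁, u₂, u₃, hU⟩ := hU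
  obtain ⟨v₁, v₂, v₃, hV⟩ := hV
  refine Units.ext ?_
  simp only [Units.val_mul, hU, hV, coe_inv_of_coe_eq_unitri hV, unitri_mul]
  congr 1 <;> ring

theorem coe_zpow_of_coe_eq_unitri {M : GL (Fin 3) ℤ} {x y z : ℤ}
    (h : (M : Matrix (Fin 3) (Fin 3) ℤ) = unitri x y z) (hxz : x * z = 0) (n : ℤ) :
    ((M ^ n : GL (Fin 3) ℤ) : Matrix (Fin 3) (Fin 3) ℤ) = unitri (n * x) (n * y) (n * z) := by
  induction n using Int.induction_on with
  | zero => simpa using unitri_zero.symm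
  | succ n ih =>
    rw [zpow_add_one, Units.val_mul, ih, h, unitri_mul]
    congr 1
    · ring
    · linear_combination (n : ℤ) * hxz
    · ring
  | pred n ih =>
    rw [zpow_sub_one, Units.val_mul, ih, coe_inv_of_coe_eq_unitri h, unitri_mul]
    congr 1
    · ring
    · linear_combination (1 + n : ℤ) * hxz
    · ring

theorem eq_zero_of_zpow_mul_zpow_mul_pcomm_zpow_eq_one {a b : ℤ} (ha : a ≠ 0) (hb : b ≠ 0)
    {A B : GL (Fin 3) ℤ} (hA : (A : Matrix (Fin 3) (Fin 3) ℤ) = unitri a 0 0)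
    (hB : (B : Matrix (Fin 3) (Fin 3) ℤ) = unitri 0 0 b) {p q r : ℤ}
    (h : A ^ p * B ^ q * pcomm A B ^ r = 1) : p = 0 ∧ q = 0 ∧ r = 0 := by
  have hC : ((pcomm A B : GL (Fin 3) ℤ) : Matrix (Fin 3) (Fin 3) ℤ) = unitri 0 (a * b) 0 := by
    simp only [pcomm, Units.val_mul, hA, hB, coe_inv_of_coe_eq_unitri hA,
      coe_inv_of_coe_eq_unitri hB, unitri_mul]
    congr 1 <;> ring
  have h' := congrArg Units.val h
  rw [Units.val_mul, Units.val_mul, coe_zpow_of_coe_eq_unitri hA (mul_zero a),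
    coe_zpow_of_coe_eq_unitri hB (zero_mul b), coe_zpow_of_coe_eq_unitri hC (zero_mul 0),
    unitri_mul, unitri_mul, Units.val_one, unitri_eq_one_iff] at h'
  obtain ⟨hpa, hr, hqb⟩ := h'
  have hp : p = 0 := by simpa [ha] using hpa
  have hq : q = 0 := by simpa [hb] using hqb
  subst hp hq
  exact ⟨rfl, rfl, by simpa [ha, hb] using hr⟩

end Unitriangular

/-- For nonzero integers `a`, `b`, the unitriangular matrices `A`, `B` determine a
well-defined injective homomorphism `K₂ → GL₃(ℤ)` with `x₁ ↦ A`, `x₂ ↦ B`. -/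
theorem K2_faithful_representation (a b : ℤ) (ha : a ≠ 0) (hb : b ≠ 0)
    (A B : Matrix.GeneralLinearGroup (Fin 3) ℤ)
    (hA : (A : Matrix (Fin 3) (Fin 3) ℤ) = !![1, a, 0; 0, 1, 0; 0, 0, 1])
    (hB : (B : Matrix (Fin 3) (Fin 3) ℤ) = !![1, 0, 0; 0, 1, b; 0, 0, 1]) :
    ∃ f : K 2 →* Matrix.GeneralLinearGroup (Fin 3) ℤ,
      f (xg 0) = A ∧ f (xg 1) = B ∧ Function.Injective f := by
  have hAB : Subgroup.closure (Set.range ![A, B]) ≤ unitriangular := by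
    rw [Subgroup.closure_le, Set.range_subset_iff, Fin.forall_fin_two]
    exact ⟨⟨a, 0, 0, hA⟩, ⟨0, 0, b, hB⟩⟩
  let f := K.lift ![A, B] fun i g hg =>
    commute_conj_of_mem_unitriangular (hAB (Subgroup.subset_closure ⟨i, rfl⟩)) (hAB hg)
  refine ⟨f, K.lift_xg _ _ 0, K.lift_xg _ _ 1, (injective_iff_map_eq_one f).2 fun u hu => ?_⟩
  obtain ⟨p, q, r, rfl⟩ := exists_eq_zpow_mul_zpow_mul_pcomm_zpow
    (commute_pcomm_left (xg_commute_conj 0 (xg 1)))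
    (commute_pcomm_right (xg_commute_conj 1 (xg 0))) closure_xg_zero_xg_one u
  simp only [map_mul, map_zpow, map_pcomm, f, K.lift_xg] at hu
  obtain ⟨rfl, rfl, rfl⟩ := eq_zero_of_zpow_mul_zpow_mul_pcomm_zpow_eq_one ha hb hA hB hu
  simp
end

section
/- In the reduced free group K₂ on generators x₁, x₂, the commutator [x₂, x₁] is central; consequently K₂ is nilpotent of class at most 2. -/
open Subgroup
open scoped commutatorElement

section Group

variable {G : Type*} [Group G]

theorem pcomm_eq_commutatorElement (a b : G) : pcomm a b = ⁅a⁻¹, b⁻¹⁆ := by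
  simp [pcomm, commutatorElement_def]

theorem commutatorElement_eq_conj_pcomm (a b : G) :
    ⁅a, b⁆ = (a * b) * pcomm a b * (a * b)⁻¹ := by
  simp only [pcomm, commutatorElement_def]; group

theorem pcomm_eq_one_iff_s8 {a b : G} : pcomm a b = 1 ↔ Commute a b := by
  rw [pcomm_eq_commutatorElement, commutatorElement_eq_one_iff_commute, Commute.inv_inv_iff]

theorem pcomm_commute_right_of_commute_conj {a b : G} (h : Commute a (b⁻¹ * a * b)) :
    Commute (pcomm b a) a := by
  have hpcomm : pcomm b a = (b⁻¹ * a * b)⁻¹ * a := by simp [pcomm, mul_assoc]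
  rw [hpcomm]
  exact h.symm.inv_left.mul_left (Commute.refl a)

theorem pcomm_commute_left_of_commute_conj {a b : G} (h : Commute b (a⁻¹ * b * a)) :
    Commute (pcomm b a) b := by
  have hpcomm : pcomm b a = b⁻¹ * (a⁻¹ * b * a) := by simp [pcomm, mul_assoc]
  rw [hpcomm]
  exact (Commute.refl b).inv_left.mul_left h.symm

theorem center_eq_centralizer_of_closure_eq_top {s : Set G} (hs : closure s = ⊤) :
    center G = centralizer s := by
  rw [← centralizer_univ, ← coe_top, ← hs, centralizer_closure]

/-- In `G ⧸ center G` the images of `s` commute pairwise, so they are central there, and then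
so is everything. -/
theorem commutator_le_center_of_closure_eq_top {s : Set G} (hs : closure s = ⊤)
    (hcomm : ∀ a ∈ s, ∀ b ∈ s, ⁅a, b⁆ ∈ center G) : commutator G ≤ center G := by
  let π := QuotientGroup.mk' (center G)
  have hgen : closure (π '' s) = ⊤ := by
    rw [← MonoidHom.map_closure, hs, map_top_of_surjective _ (QuotientGroup.mk'_surjective _)]
  have himage_central : π '' s ⊆ center (G ⧸ center G) := by
    rintro _ ⟨a, ha, rfl⟩
    rw [center_eq_centralizer_of_closure_eq_top hgen, SetLike.mem_coe, mem_centralizer_iff]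
    rintro _ ⟨b, hb, rfl⟩
    rw [← commutatorElement_eq_one_iff_mul_comm, ← map_commutatorElement,
      QuotientGroup.mk'_apply, QuotientGroup.eq_one_iff]
    exact hcomm b hb a ha
  have hcenter : center (G ⧸ center G) = ⊤ := by
    rw [eq_top_iff, center_eq_centralizer_of_closure_eq_top hgen]
    exact fun q _ t ht => (mem_center_iff.mp (himage_central ht) q).symm
  exact Normal.quotient_commutative_iff_commutator_le.mp (center_eq_top_iff.mp hcenter)

end Group

namespace K

variable {n : ℕ}

theorem closure_range_xg : closure (Set.range (xg : Fin n → K n)) = ⊤ := by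
  have hrange : Set.range (xg : Fin n → K n) =
      QuotientGroup.mk' _ '' Set.range FreeGroup.of := by
    rw [← Set.range_comp]
    rfl
  rw [hrange, ← MonoidHom.map_closure, FreeGroup.closure_range_of,
    map_top_of_surjective _ (QuotientGroup.mk'_surjective _)]

theorem xg_commute_conj (i : Fin n) (h : K n) : Commute (xg i) (h⁻¹ * xg i * h) := by
  obtain ⟨g, rfl⟩ := QuotientGroup.mk_surjective h
  have hrel : (QuotientGroup.mk (pcomm (FreeGroup.of i) (g⁻¹ * FreeGroup.of i * g)) : K n) = 1 :=
    (QuotientGroup.eq_one_iff _).mpr (subset_normalClosure ⟨i, g, rfl⟩)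
  exact pcomm_eq_one_iff_s8.mp hrel

theorem pcomm_xg_mem_center : pcomm (xg 1) (xg 0) ∈ center (K 2) := by
  rw [center_eq_centralizer_of_closure_eq_top closure_range_xg, mem_centralizer_iff,
    Set.forall_mem_range]
  intro i
  fin_cases i
  · exact (pcomm_commute_right_of_commute_conj (xg_commute_conj 0 (xg 1))).eq.symm
  · exact (pcomm_commute_left_of_commute_conj (xg_commute_conj 1 (xg 0))).eq.symm

theorem commutatorElement_xg_mem_center (i j : Fin 2) : ⁅xg i, xg j⁆ ∈ center (K 2) := by
  have h10 : ⁅xg (1 : Fin 2), xg 0⁆ ∈ center (K 2) := by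
    rw [commutatorElement_eq_conj_pcomm]
    exact (center (K 2)).normal_of_characteristic.conj_mem _ pcomm_xg_mem_center _
  fin_cases i <;> fin_cases j
  · simp
  · exact commutatorElement_inv (xg (1 : Fin 2)) (xg 0) ▸ inv_mem h10
  · exact h10
  · simp

end K

/-- In `K₂` the commutator `[x₂, x₁]` is central, and `K₂` is nilpotent of class
at most `2`. -/
theorem K2_commutator_central_and_nilpotent :
    (∀ g : K 2, g * pcomm (xg 1) (xg 0) = pcomm (xg 1) (xg 0) * g) ∧
    (⊤ : Subgroup (K 2)).lowerCentralSeries 2 = ⊥ := by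
  refine ⟨mem_center_iff.mp K.pcomm_xg_mem_center, Subgroup.lowerCentralSeries_succ_eq_bot _ ?_⟩
  rw [top_lowerCentralSeries_one]
  refine commutator_le_center_of_closure_eq_top K.closure_range_xg ?_
  simp only [Set.forall_mem_range]
  exact K.commutatorElement_xg_mem_center
end

section
/- The kernel of the group homomorphism from the homotopy braid group B̂₃ onto the symmetric group S₃ that sends the image of σ₁ to the transposition (1 2) and the image of σ₂ to the transposition (2 3) is exactly the subgroup of B̂₃ generated by b₁₂, b₁₃, b₂₃. -/
/-- The braid relation `σ₁σ₂σ₁ = σ₂σ₁σ₂` on two generators. -/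
def braidRel3 : Set (FreeGroup (Fin 2)) :=
  { FreeGroup.of 0 * FreeGroup.of 1 * FreeGroup.of 0 *
      (FreeGroup.of 1 * FreeGroup.of 0 * FreeGroup.of 1)⁻¹ }

/-- The braid group `B₃`. -/
abbrev B3 := PresentedGroup braidRel3

/-- The generator `σ₁` of `B₃`. -/
def s1 : B3 := PresentedGroup.of 0
/-- The generator `σ₂` of `B₃`. -/
def s2 : B3 := PresentedGroup.of 1
/-- `a₁₂ = σ₁²`. -/
def a12 : B3 := s1 ^ 2
/-- `a₁₃ = σ₂σ₁²σ₂⁻¹`. -/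
def a13 : B3 := s2 * s1 ^ 2 * s2⁻¹
/-- `a₂₃ = σ₂²`. -/
def a23 : B3 := s2 ^ 2

/-- The homotopy relations in `B₃`: `[a₁₃, g⁻¹a₁₃g]` and `[a₂₃, g⁻¹a₂₃g]` for `g`
in the subgroup generated by `a₁₃` and `a₂₃`. -/
def homotopyRels3 : Set B3 :=
  { x | ∃ g ∈ Subgroup.closure {a13, a23},
        x = pcomm a13 (g⁻¹ * a13 * g) ∨ x = pcomm a23 (g⁻¹ * a23 * g) }

/-- The homotopy braid group `B̂₃`. -/
abbrev HB3 := B3 ⧸ Subgroup.normalClosure homotopyRels3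

/-- The canonical projection `B₃ → B̂₃`. -/
def pr : B3 →* HB3 := QuotientGroup.mk' _

/-- The image of `σ₁` in `B̂₃`. -/
def t1 : HB3 := pr s1
/-- The image of `σ₂` in `B̂₃`. -/
def t2 : HB3 := pr s2
/-- The image `b₁₂` of `a₁₂` in `B̂₃`. -/
def b12 : HB3 := pr a12
/-- The image `b₁₃` of `a₁₃` in `B̂₃`. -/
def b13 : HB3 := pr a13
/-- The image `b₂₃` of `a₂₃` in `B̂₃`. -/
def b23 : HB3 := pr a23
/-- `z = [b₂₃, b₁₃]`. -/
def zz : HB3 := pcomm b23 b13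

/-!
The conjugation action of `σ₁, σ₂` permutes `b₁₂, b₁₃, b₂₃` up to conjugation inside the
subgroup `P` they generate, and `σᵢ² ∈ P`, so `P` is normal. In `B̂₃ ⧸ P` the images of `σ₁, σ₂`
are involutions satisfying the braid relation, so every element is one of the six words
`1, x, y, xy, yx, xyx`. These six words map to the six distinct permutations of `Fin 3`, so the
map induced by `f` on `B̂₃ ⧸ P` is injective, i.e. `ker f = P`.
-/

open Subgroup

section Normality

variable {G : Type*} [Group G]

theorem Subgroup.conj_mem_closure_of_forall_conj_mem {S : Set G} {g : G}
    (h : ∀ s ∈ S, g * s * g⁻¹ ∈ closure S) {x : G} (hx : x ∈ closure S) :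
    g * x * g⁻¹ ∈ closure S :=
  (closure_le ((closure S).comap (MulAut.conj g).toMonoidHom)).2 h hx

theorem Subgroup.mem_normalizer_of_conj_mem_of_sq_mem {H : Subgroup G} {g : G}
    (hconj : ∀ h ∈ H, g * h * g⁻¹ ∈ H) (hsq : g ^ 2 ∈ H) : g ∈ normalizer (H : Set G) := by
  refine mem_normalizer_iff.2 fun h => ⟨hconj h, fun hh => ?_⟩
  have : h = (g ^ 2)⁻¹ * (g * (g * h * g⁻¹) * g⁻¹) * g ^ 2 := by group
  rw [this]
  exact H.mul_mem (H.mul_mem (H.inv_mem hsq) (hconj _ hh)) hsq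

theorem Subgroup.normal_of_conj_mem_of_sq_mem {H : Subgroup G} {T : Set G} (hT : closure T = ⊤)
    (hconj : ∀ g ∈ T, ∀ h ∈ H, g * h * g⁻¹ ∈ H) (hsq : ∀ g ∈ T, g ^ 2 ∈ H) : H.Normal := by
  rw [← normalizer_eq_top_iff, eq_top_iff, ← hT, closure_le]
  exact fun g hg => mem_normalizer_of_conj_mem_of_sq_mem (hconj g hg) (hsq g hg)

theorem Subgroup.closure_image_eq_top {N : Type*} [Group N] {φ : G →* N}
    (hφ : Function.Surjective φ) {S : Set G} (hS : closure S = ⊤) : closure (φ '' S) = ⊤ := by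
  rw [← MonoidHom.map_closure, hS, map_top_of_surjective φ hφ]

end Normality

section BraidRelation

variable {G : Type*} [Group G] {s t : G}

theorem conj_eq_of_braid (h : s * t * s = t * s * t) : s * t * s⁻¹ = t⁻¹ * s * t := by
  calc s * t * s⁻¹ = t⁻¹ * (t * s * t) * s⁻¹ := by group
    _ = t⁻¹ * s * t := by rw [← h]; group

theorem conj_conj_sq_of_braid (h : s * t * s = t * s * t) :
    s * (t * s ^ 2 * t⁻¹) * s⁻¹ = t ^ 2 := by
  calc s * (t * s ^ 2 * t⁻¹) * s⁻¹ = (s * t * s) * (s * t * s⁻¹)⁻¹ := by rw [sq]; group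
    _ = (t * s * t) * (t⁻¹ * s * t)⁻¹ := by rw [h, conj_eq_of_braid h]
    _ = t ^ 2 := by rw [sq]; group

theorem conj_sq_of_braid (h : s * t * s = t * s * t) :
    s * t ^ 2 * s⁻¹ = (t ^ 2)⁻¹ * (t * s ^ 2 * t⁻¹) * t ^ 2 := by
  calc s * t ^ 2 * s⁻¹ = (s * t * s⁻¹) ^ 2 := by simp only [sq]; group
    _ = (t⁻¹ * s * t) ^ 2 := by rw [conj_eq_of_braid h]
    _ = (t ^ 2)⁻¹ * (t * s ^ 2 * t⁻¹) * t ^ 2 := by simp only [sq]; group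

/-- The six elements of `S₃ = ⟨x, y | x², y², xyx = yxy⟩`, as words in its generators. -/
def braidWords (x y : G) : Fin 6 → G := ![1, x, y, x * y, y * x, x * y * x]

theorem MonoidHom.comp_braidWords {H : Type*} [Group H] (φ : G →* H) (x y : G) :
    φ ∘ braidWords x y = braidWords (φ x) (φ y) := by
  funext i
  fin_cases i <;> simp [braidWords]

theorem braidWords_surjective {x y : G} (hgen : closure {x, y} = ⊤) (hx : x ^ 2 = 1)
    (hy : y ^ 2 = 1) (hxy : x * y * x = y * x * y) : Function.Surjective (braidWords x y) := by
  have hx' : x * x = 1 := by rw [← sq, hx]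
  have hy' : y * y = 1 := by rw [← sq, hy]
  have hxyxy : x * y * x * y = y * x := by rw [hxy, mul_assoc, hy', mul_one]
  have mul_x : ∀ i, ∃ j, braidWords x y j = braidWords x y i * x := by
    intro i
    fin_cases i
    exacts [⟨1, by simp [braidWords]⟩, ⟨0, by simp [braidWords, hx']⟩,
      ⟨4, by simp [braidWords]⟩, ⟨5, by simp [braidWords]⟩,
      ⟨2, by simp [braidWords, mul_assoc, hx']⟩, ⟨3, by simp [braidWords, mul_assoc, hx']⟩]
  have mul_y : ∀ i, ∃ j, braidWords x y j = braidWords x y i * y := by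
    intro i
    fin_cases i
    exacts [⟨2, by simp [braidWords]⟩, ⟨3, by simp [braidWords]⟩,
      ⟨0, by simp [braidWords, hy']⟩, ⟨1, by simp [braidWords, mul_assoc, hy']⟩,
      ⟨5, by simp [braidWords, hxy]⟩, ⟨4, by simp [braidWords, hxyxy]⟩]
  have mul_gen : ∀ i, ∀ g ∈ ({x, y} : Set G), ∃ j, braidWords x y j = braidWords x y i * g := by
    rintro i g (rfl | rfl)
    exacts [mul_x i, mul_y i]
  intro u
  induction (hgen ▸ mem_top u : u ∈ closure {x, y}) using closure_induction_right with
  | one => exact ⟨0, rfl⟩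
  | mul_right w _ g hg ih =>
    obtain ⟨i, rfl⟩ := ih
    exact mul_gen i g hg
  | mul_inv_cancel w _ g hg ih =>
    obtain ⟨i, rfl⟩ := ih
    have hg_inv : g⁻¹ = g := by
      rcases hg with rfl | rfl
      exacts [inv_eq_of_mul_eq_one_right hx', inv_eq_of_mul_eq_one_right hy']
    rw [hg_inv]
    exact mul_gen i g hg

end BraidRelation

theorem braidWords_swap_injective :
    Function.Injective (braidWords (Equiv.swap (0 : Fin 3) 1) (Equiv.swap 1 2)) := by
  decide

theorem s1_mul_s2_mul_s1 : s1 * s2 * s1 = s2 * s1 * s2 := by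
  rw [← mul_inv_eq_one]
  exact (QuotientGroup.eq_one_iff _).2 (subset_normalClosure rfl)

theorem t1_mul_t2_mul_t1 : t1 * t2 * t1 = t2 * t1 * t2 := by
  simpa only [t1, t2, map_mul] using congrArg pr s1_mul_s2_mul_s1

theorem closure_t1_t2 : closure ({t1, t2} : Set HB3) = ⊤ := by
  have hrange : Set.range (PresentedGroup.of : Fin 2 → B3) = {s1, s2} := by
    ext; simp [Fin.exists_fin_two, s1, s2, eq_comm]
  have h := closure_image_eq_top (φ := pr) (QuotientGroup.mk'_surjective _)
    (hrange ▸ PresentedGroup.closure_range_of braidRel3)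
  rwa [Set.image_pair] at h

theorem b12_eq : b12 = t1 ^ 2 := by simp only [b12, a12, t1, map_pow]

theorem b13_eq : b13 = t2 * t1 ^ 2 * t2⁻¹ := by
  simp only [b13, a13, t1, t2, map_mul, map_pow, map_inv]

theorem b23_eq : b23 = t2 ^ 2 := by simp only [b23, a23, t2, map_pow]

theorem t1_conj_b12 : t1 * b12 * t1⁻¹ = b12 := by rw [b12_eq]; group

theorem t1_conj_b13 : t1 * b13 * t1⁻¹ = b23 := by
  rw [b13_eq, b23_eq, conj_conj_sq_of_braid t1_mul_t2_mul_t1]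

theorem t1_conj_b23 : t1 * b23 * t1⁻¹ = b23⁻¹ * b13 * b23 := by
  rw [b13_eq, b23_eq, conj_sq_of_braid t1_mul_t2_mul_t1]

theorem t2_conj_b12 : t2 * b12 * t2⁻¹ = b13 := by rw [b12_eq, b13_eq]

theorem t2_conj_b13 : t2 * b13 * t2⁻¹ = b23 * b12 * b23⁻¹ := by
  rw [b12_eq, b13_eq, b23_eq]; simp only [sq]; group

theorem t2_conj_b23 : t2 * b23 * t2⁻¹ = b23 := by rw [b23_eq]; group

theorem closure_b12_b13_b23_normal : (closure ({b12, b13, b23} : Set HB3)).Normal := by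
  set P := closure ({b12, b13, b23} : Set HB3)
  have h12 : b12 ∈ P := subset_closure (by simp)
  have h13 : b13 ∈ P := subset_closure (by simp)
  have h23 : b23 ∈ P := subset_closure (by simp)
  refine normal_of_conj_mem_of_sq_mem closure_t1_t2 ?_ ?_
  · rintro g (rfl | rfl) h hh <;> refine conj_mem_closure_of_forall_conj_mem ?_ hh <;>
      rintro b (rfl | rfl | rfl)
    · rwa [t1_conj_b12]
    · rwa [t1_conj_b13]
    · rw [t1_conj_b23]; exact P.mul_mem (P.mul_mem (P.inv_mem h23) h13) h23
    · rwa [t2_conj_b12]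
    · rw [t2_conj_b13]; exact P.mul_mem (P.mul_mem h23 h12) (P.inv_mem h23)
    · rwa [t2_conj_b23]
  · rintro g (rfl | rfl)
    exacts [b12_eq ▸ h12, b23_eq ▸ h23]

theorem braidWords_mk_surjective (N : Subgroup HB3) [N.Normal] (h12 : b12 ∈ N) (h23 : b23 ∈ N) :
    Function.Surjective (braidWords (t1 : HB3 ⧸ N) t2) := by
  refine braidWords_surjective ?_ ?_ ?_ ?_
  · simpa only [Set.image_pair, QuotientGroup.mk'_apply] using
      closure_image_eq_top (QuotientGroup.mk'_surjective N) closure_t1_t2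
  · rwa [← QuotientGroup.mk_pow, ← b12_eq, QuotientGroup.eq_one_iff]
  · rwa [← QuotientGroup.mk_pow, ← b23_eq, QuotientGroup.eq_one_iff]
  · simp only [← QuotientGroup.mk_mul, t1_mul_t2_mul_t1]

/-- The kernel of the homomorphism `B̂₃ → S₃`, `σ₁ ↦ (1 2)`, `σ₂ ↦ (2 3)`, is the
subgroup generated by `b₁₂, b₁₃, b₂₃`. -/
theorem ker_to_symmetric_group (f : HB3 →* Equiv.Perm (Fin 3))
    (hf1 : f t1 = Equiv.swap 0 1) (hf2 : f t2 = Equiv.swap 1 2) :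
    f.ker = Subgroup.closure ({b12, b13, b23} : Set HB3) := by
  set P := closure ({b12, b13, b23} : Set HB3)
  have hP : P ≤ f.ker := by
    rw [closure_le]
    rintro b (rfl | rfl | rfl) <;>
      simp only [SetLike.mem_coe, MonoidHom.mem_ker, b12_eq, b13_eq, b23_eq, map_mul, map_inv,
        map_pow, hf1, hf2] <;> decide
  have : P.Normal := closure_b12_b13_b23_normal
  set F := QuotientGroup.lift P f hP
  have hF : Function.Injective F := by
    refine .of_comp_right ?_ (braidWords_mk_surjective P (subset_closure (by simp))
      (subset_closure (by simp)))
    rw [MonoidHom.comp_braidWords]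
    simpa only [F, QuotientGroup.lift_mk, hf1, hf2] using braidWords_swap_injective
  refine le_antisymm (fun z hz => ?_) hP
  rw [← QuotientGroup.eq_one_iff]
  exact hF (by rwa [QuotientGroup.lift_mk, map_one])
end
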